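/- Let L be the first-order language with a single binary function symbol f, let 𝒜 be an orderly L-algebra, and let ♯𝒜 be the orderly L-algebra defined by ♯𝒜(t) = (𝒜(tˣ), 𝒜(tʸ)), where (vᵢˣ, vᵢʸ) = (v_{2i}, v_{2i+1}) and ((f s t)ˣ, (f s t)ʸ) = (f sˣ sʸ, f tˣ tʸ) for orderly terms s < t. If 𝒜 is Ramsey, then ♯𝒜 is Ramsey. -/

import Mathlib

open Function Set

universe u v w

/-- Terms of a purely functional first-order language whose function symbols
of arity `n` form the type `F n`, with variables indexed by `ℕ`. -/
inductive Tm (F : ℕ → Type u) : Type u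
  | var : ℕ → Tm F
  | func : {n : ℕ} → F n → (Fin n → Tm F) → Tm F

namespace Tm

variable {F : ℕ → Type u} {A : Type v} {β : Type w}

/-- The list of (indices of) variables occurring in a term, from left to right. -/
def varList : Tm F → List ℕ
  | .var i => [i]
  | .func (n := n) _ ts => (List.finRange n).flatMap fun i => (ts i).varList

/-- A term is *orderly* if the indices of the variables occurring in it,
read from left to right, are strictly increasing. -/
def Orderly (t : Tm F) : Prop := t.varList.Chain' (· < ·)

/-- `TermLT s t` iff the index of the last variable of `s` is less than the
index of the first variable of `t`. -/
def TermLT (s t : Tm F) : Prop :=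
  ∃ i j, s.varList.getLast? = some i ∧ t.varList.head? = some j ∧ i < j

/-- An infinite sequence of orderly terms is *admissible* iff it is increasing
with respect to `TermLT`. -/
def Admissible (ts : ℕ → Tm F) : Prop :=
  (∀ i, (ts i).Orderly) ∧ ∀ i, TermLT (ts i) (ts (i + 1))

/-- `s.subst σ` replaces each variable `vᵢ` in `s` by `σ i`. -/
def subst (σ : ℕ → Tm F) : Tm F → Tm F
  | .var i => σ i
  | .func f ts => .func f fun i => (ts i).subst σ

/-- Interpretation of a term in a structure with underlying set `A` whose
interpretation of the function symbols is `I`, under the assignment `a`. -/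
def realize (I : ∀ n, F n → (Fin n → A) → A) (a : ℕ → A) : Tm F → A
  | .var i => a i
  | .func (n := n) f ts => I n f fun i => (ts i).realize I a

end Tm

section General

variable {F : ℕ → Type u} {A : Type v} {β : Type w}

/-- `b` is a reduction of `a` (with respect to the algebra `(A, I)`). -/
def SeqReduction (I : ∀ n, F n → (Fin n → A) → A) (b a : ℕ → A) : Prop :=
  ∃ ts : ℕ → Tm F, Tm.Admissible ts ∧ ∀ i, b i = (ts i).realize I a

/-- The set of finite reductions of `a`. -/
def FR (I : ∀ n, F n → (Fin n → A) → A) (a : ℕ → A) : Set A :=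
  { x | ∃ t : Tm F, t.Orderly ∧ x = t.realize I a }

/-- `(A, I)` is a Ramsey algebra. -/
def RamseyAlg (I : ∀ n, F n → (Fin n → A) → A) : Prop :=
  ∀ (a : ℕ → A) (X : Set A),
    ∃ b, SeqReduction I b a ∧ (FR I b ⊆ X ∨ FR I b ∩ X = ∅)

/-- `(A, I)` is Ramsey below `a`. -/
def RamseyBelow (I : ∀ n, F n → (Fin n → A) → A) (a : ℕ → A) : Prop :=
  ∀ b, SeqReduction I b a → ∀ X : Set A,
    ∃ c, SeqReduction I c b ∧ (FR I c ⊆ X ∨ FR I c ∩ X = ∅)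

/-- An increasing tuple `t₁ < t₂ < ⋯ < tₙ` of orderly terms. -/
def OrdTuple {n : ℕ} (t : Fin n → Tm F) : Prop :=
  (∀ i, (t i).Orderly) ∧ ∀ i j : Fin n, i < j → Tm.TermLT (t i) (t j)

/-- `𝒜` (as a function on orderly terms) is an orderly algebra. -/
def IsOrderlyAlg (𝒜 : Tm F → β) : Prop :=
  ∀ (n : ℕ) (f : F n) (t t' : Fin n → Tm F), OrdTuple t → OrdTuple t' →
    (∀ k, 𝒜 (t k) = 𝒜 (t' k)) → 𝒜 (.func f t) = 𝒜 (.func f t')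

/-- The universe of an orderly algebra: its range on orderly terms. -/
def OAUniv (𝒜 : Tm F → β) : Set β := 𝒜 '' { t | t.Orderly }

/-- `ℬ` is a reduction of the orderly algebra `𝒜` (as functions on orderly terms). -/
def OAReduction (ℬ 𝒜 : Tm F → β) : Prop :=
  ∃ ts : ℕ → Tm F, Tm.Admissible ts ∧ ∀ s : Tm F, s.Orderly → ℬ s = 𝒜 (s.subst ts)

/-- `ℬ` is homogeneous for `X`. -/
def Homog (ℬ : Tm F → β) (X : Set β) : Prop :=
  OAUniv ℬ ⊆ X ∨ OAUniv ℬ ∩ X = ∅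

/-- An orderly algebra is weakly Ramsey. -/
def WeaklyRamseyOA (𝒜 : Tm F → β) : Prop :=
  ∀ X ⊆ OAUniv 𝒜, ∃ ℬ, OAReduction ℬ 𝒜 ∧ Homog ℬ X

/-- An orderly algebra is Ramsey. -/
def RamseyOA (𝒜 : Tm F → β) : Prop :=
  ∀ ℬ, OAReduction ℬ 𝒜 → ∀ X ⊆ OAUniv 𝒜, ∃ 𝒞, OAReduction 𝒞 ℬ ∧ Homog 𝒞 X

/-- The orderly algebra induced from the algebra `(A, I)` by the sequence `a`. -/
def inducedOA (I : ∀ n, F n → (Fin n → A) → A) (a : ℕ → A) : Tm F → A :=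
  fun t => t.realize I a

/-- `[FR(c)]ⁿ_<` : increasing `n`-tuples of finite reductions of `c`. -/
def FRtuple (I : ∀ n, F n → (Fin n → A) → A) (n : ℕ) (c : ℕ → A) : Set (Fin n → A) :=
  { x | ∃ t : Fin n → Tm F, OrdTuple t ∧ ∀ i, x i = (t i).realize I c }

/-- `‖𝒞‖ⁿ_<` for an orderly algebra `𝒞`. -/
def OATuple (n : ℕ) (𝒞 : Tm F → β) : Set (Fin n → β) :=
  { x | ∃ t : Fin n → Tm F, OrdTuple t ∧ ∀ i, x i = 𝒞 (t i) }

/-- The basic set `[n, a]` of the preorder with approximations `(ᵂA, ≤)`. -/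
def Approx (I : ∀ n, F n → (Fin n → A) → A) (n : ℕ) (a : ℕ → A) : Set (ℕ → A) :=
  { b | SeqReduction I b a ∧ ∀ i < n, b i = a i }

/-- The natural topology on `ᵂA`, generated by the sets `[n, a]`. -/
def natTop (I : ∀ n, F n → (Fin n → A) → A) : TopologicalSpace (ℕ → A) :=
  TopologicalSpace.generateFrom { S | ∃ n a, S = Approx I n a }

/-- A subset `X ⊆ ᵂA` is Ramsey. -/
def RamseySet (I : ∀ n, F n → (Fin n → A) → A) (X : Set (ℕ → A)) : Prop :=
  ∀ (n : ℕ) (a : ℕ → A), ∃ b ∈ Approx I n a,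
    Approx I n b ⊆ X ∨ Approx I n b ∩ X = ∅

/-- `X` has the property of Baire in the natural topology:
its symmetric difference with some open set is meager. -/
def HasBaireProperty (I : ∀ n, F n → (Fin n → A) → A) (X : Set (ℕ → A)) : Prop :=
  ∃ U : Set (ℕ → A), @IsOpen _ (natTop I) U ∧ @IsMeagre _ (natTop I) (symmDiff X U)

end General

/-- The language with a single binary function symbol. -/
inductive BinF : ℕ → Type
  | f : BinF 2

/-- Application of the binary function symbol: the term `f s t`. -/
def fapp (s t : Tm BinF) : Tm BinF := .func BinF.f ![s, t]

/-- The interpretation of the single binary function symbol by a binary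
operation `g` on `A`. -/
def binI {A : Type v} (g : A → A → A) : ∀ n, BinF n → (Fin n → A) → A
  | _, BinF.f, args => g (args 0) (args 1)

/-- The pair `(tˣ, tʸ)`: `(vᵢˣ, vᵢʸ) = (v_{2i}, v_{2i+1})` and
`((f s t)ˣ, (f s t)ʸ) = (f sˣ sʸ, f tˣ tʸ)`. -/
def xyPair : Tm BinF → Tm BinF × Tm BinF
  | .var i => (.var (2 * i), .var (2 * i + 1))
  | .func BinF.f ts =>
      (fapp (xyPair (ts 0)).1 (xyPair (ts 0)).2, fapp (xyPair (ts 1)).1 (xyPair (ts 1)).2)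

/-- The orderly algebra `♯𝒜`, `♯𝒜(t) = (𝒜(tˣ), 𝒜(tʸ))`. -/
def sharpOA {β : Type w} (𝒜 : Tm BinF → β) : Tm BinF → β × β :=
  fun t => (𝒜 (xyPair t).1, 𝒜 (xyPair t).2)

/-!
A reduction of `♯𝒜` is `♯𝒜'` for a reduction `𝒜'` of `𝒜`, and `♯𝒜'(t)` is the pair of values
of `𝒜'` at the orderly terms `tˣ < tʸ`. So the heart of the matter is a Ramsey theorem for
pairs: inside any reduction of `𝒜` there is a reduction `𝒞` on which a colouring `X ⊆ β × β`
of the pairs `(𝒞 t₁, 𝒞 t₂)`, `t₁ < t₂`, is constant. It is proved the way Ramsey's theorem for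
pairs follows from the pigeonhole principle. A fusion argument first gives an end-homogeneous
reduction, on which the colour of `(𝒞 t₁, 𝒞 t₂)` depends only on `t₁`: stage `m` applies the
Ramsey property once for each of the finitely many orderly terms in `v₀, …, v_{m-1}` to the part
of the current reduction above `v_{m-1}`, and the stages are then diagonalised. One more
application of the Ramsey property, to the colour of the first entry, makes the colour constant.

Back at `♯𝒜'`, apply this to the reduction `t ↦ 𝒜'(t[f v₀ v₁, f v₂ v₃, …]) = 𝒜'(f tˣ tʸ)` of
`𝒜'`: a homogeneous sequence `q` for pairs there yields the homogeneous reduction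
`s ↦ ♯𝒜'(s[f q₀ q₁, f q₂ q₃, …])` of `♯𝒜'`.
-/

namespace Tm

section Substitution

variable {F : ℕ → Type u}

def substComp (σ τ : ℕ → Tm F) : ℕ → Tm F := fun i => (σ i).subst τ

theorem subst_subst (σ τ : ℕ → Tm F) :
    ∀ t : Tm F, (t.subst σ).subst τ = t.subst (substComp σ τ)
  | .var _ => rfl
  | .func f ts => by
    simp only [subst]
    congr 1
    funext i
    exact subst_subst σ τ (ts i)

theorem substComp_assoc (σ τ ρ : ℕ → Tm F) :
    substComp (substComp σ τ) ρ = substComp σ (substComp τ ρ) :=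
  funext fun i => subst_subst τ ρ (σ i)

theorem subst_var_self : ∀ t : Tm F, t.subst Tm.var = t
  | .var _ => rfl
  | .func f ts => by
    simp only [subst]
    congr 1
    funext i
    exact subst_var_self (ts i)

theorem subst_congr {σ τ : ℕ → Tm F} :
    ∀ {t : Tm F}, (∀ i ∈ t.varList, σ i = τ i) → t.subst σ = t.subst τ
  | .var i, h => h i (List.mem_singleton_self i)
  | .func f ts, h => by
    simp only [subst]
    congr 1
    funext i
    exact subst_congr fun j hj => h j (List.mem_flatMap.2 ⟨i, List.mem_finRange i, hj⟩)

end Substitution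

theorem func_eq_fapp (ts : Fin 2 → Tm BinF) : Tm.func BinF.f ts = fapp (ts 0) (ts 1) := by
  unfold fapp
  congr 1
  funext i
  fin_cases i <;> rfl

@[elab_as_elim]
theorem fapp_induction {motive : Tm BinF → Prop} (var : ∀ i, motive (.var i))
    (app : ∀ s t, motive s → motive t → motive (fapp s t)) : ∀ t, motive t
  | .var i => var i
  | .func BinF.f ts =>
    func_eq_fapp ts ▸ app _ _ (fapp_induction var app (ts 0)) (fapp_induction var app (ts 1))

theorem subst_fapp (σ : ℕ → Tm BinF) (s t : Tm BinF) :
    (fapp s t).subst σ = fapp (s.subst σ) (t.subst σ) := by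
  show Tm.func BinF.f _ = _
  rw [func_eq_fapp]
  rfl

theorem varList_fapp (s t : Tm BinF) : (fapp s t).varList = s.varList ++ t.varList := by
  simp [fapp, varList, List.finRange_succ]

def fv : Tm BinF → ℕ
  | .var i => i
  | .func BinF.f ts => fv (ts 0)

def lv : Tm BinF → ℕ
  | .var i => i
  | .func BinF.f ts => lv (ts 1)

@[simp] theorem fv_var (i : ℕ) : (Tm.var i : Tm BinF).fv = i := rfl
@[simp] theorem lv_var (i : ℕ) : (Tm.var i : Tm BinF).lv = i := rfl
@[simp] theorem fv_fapp (s t : Tm BinF) : (fapp s t).fv = s.fv := rfl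
@[simp] theorem lv_fapp (s t : Tm BinF) : (fapp s t).lv = t.lv := rfl

theorem head?_varList (t : Tm BinF) : t.varList.head? = some t.fv := by
  induction t using fapp_induction with
  | var i => rfl
  | app s t hs _ =>
    rw [varList_fapp, List.head?_append, hs]
    rfl

theorem getLast?_varList (t : Tm BinF) : t.varList.getLast? = some t.lv := by
  induction t using fapp_induction with
  | var i => rfl
  | app s t _ ht =>
    rw [varList_fapp, List.getLast?_append, ht]
    rfl

theorem fv_mem_varList (t : Tm BinF) : t.fv ∈ t.varList :=
  List.mem_of_mem_head? (head?_varList t)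

theorem lv_mem_varList (t : Tm BinF) : t.lv ∈ t.varList :=
  List.mem_of_mem_getLast? (getLast?_varList t)

theorem termLT_iff {s t : Tm BinF} : TermLT s t ↔ s.lv < t.fv := by
  simp [TermLT, head?_varList, getLast?_varList]

theorem fv_subst (σ : ℕ → Tm BinF) (t : Tm BinF) : (t.subst σ).fv = (σ t.fv).fv := by
  induction t using fapp_induction with
  | var i => rfl
  | app s t hs _ => rw [subst_fapp, fv_fapp, hs, fv_fapp]

theorem lv_subst (σ : ℕ → Tm BinF) (t : Tm BinF) : (t.subst σ).lv = (σ t.lv).lv := by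
  induction t using fapp_induction with
  | var i => rfl
  | app s t _ ht => rw [subst_fapp, lv_fapp, ht, lv_fapp]

section Orderly

theorem orderly_iff {t : Tm BinF} : t.Orderly ↔ t.varList.IsChain (· < ·) := Iff.rfl

theorem orderly_var (i : ℕ) : (Tm.var i : Tm BinF).Orderly :=
  List.isChain_singleton i

theorem orderly_fapp {s t : Tm BinF} :
    (fapp s t).Orderly ↔ s.Orderly ∧ t.Orderly ∧ s.lv < t.fv := by
  simp [orderly_iff, varList_fapp, List.isChain_append, head?_varList, getLast?_varList]

theorem Orderly.mem_varList {t : Tm BinF} (ht : t.Orderly) {i : ℕ} (hi : i ∈ t.varList) :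
    t.fv ≤ i ∧ i ≤ t.lv := by
  induction t using fapp_induction generalizing i with
  | var j =>
    rw [List.mem_singleton.1 hi]
    exact ⟨le_rfl, le_rfl⟩
  | app s t hs ht' =>
    obtain ⟨os, ot, hst⟩ := orderly_fapp.1 ht
    have := hs os (lv_mem_varList s)
    have := ht' ot (fv_mem_varList t)
    rw [varList_fapp, List.mem_append] at hi
    rcases hi with hi | hi
    · have := hs os hi
      simp only [fv_fapp, lv_fapp]
      omega
    · have := ht' ot hi
      simp only [fv_fapp, lv_fapp]
      omega

theorem Orderly.fv_le_lv {t : Tm BinF} (ht : t.Orderly) : t.fv ≤ t.lv :=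
  (ht.mem_varList (fv_mem_varList t)).2

theorem Orderly.subst_congr {t : Tm BinF} (ht : t.Orderly) {σ τ : ℕ → Tm BinF} {N : ℕ}
    (hN : t.lv < N) (h : ∀ i < N, σ i = τ i) : t.subst σ = t.subst τ :=
  Tm.subst_congr fun i hi => h i ((ht.mem_varList hi).2.trans_lt hN)

theorem Orderly.subst {t : Tm BinF} (ht : t.Orderly) {σ : ℕ → Tm BinF}
    (hσ : ∀ i ∈ t.varList, (σ i).Orderly)
    (hmono : ∀ i ∈ t.varList, ∀ j ∈ t.varList, i < j → (σ i).lv < (σ j).fv) :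
    (t.subst σ).Orderly := by
  induction t using fapp_induction with
  | var i => exact hσ i (List.mem_singleton_self i)
  | app s t hs ht' =>
    obtain ⟨os, ot, hst⟩ := orderly_fapp.1 ht
    simp only [varList_fapp, List.mem_append] at hσ hmono
    rw [subst_fapp, orderly_fapp, lv_subst, fv_subst]
    exact ⟨hs os (fun i hi => hσ i (.inl hi)) (fun i hi j hj => hmono i (.inl hi) j (.inl hj)),
      ht' ot (fun i hi => hσ i (.inr hi)) (fun i hi j hj => hmono i (.inr hi) j (.inr hj)),
      hmono _ (.inl (lv_mem_varList s)) _ (.inr (fv_mem_varList t)) hst⟩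

theorem finite_setOf_varList_lt_length_le (m : ℕ) : ∀ k : ℕ,
    {t : Tm BinF | (∀ i ∈ t.varList, i < m) ∧ t.varList.length ≤ k}.Finite
  | 0 => Set.finite_empty.subset fun t ht =>
      List.ne_nil_of_mem (fv_mem_varList t) (List.length_eq_zero_iff.1 (Nat.le_zero.1 ht.2))
  | k + 1 => by
    have ih := finite_setOf_varList_lt_length_le m k
    refine (((Set.finite_Iio m).image Tm.var).union (ih.image2 fapp ih)).subset ?_
    intro t ⟨hlt, hlen⟩
    induction t using fapp_induction with
    | var i => exact .inl ⟨i, hlt i (List.mem_singleton_self i), rfl⟩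
    | app s t _ _ =>
      simp only [varList_fapp, List.mem_append, List.length_append] at hlt hlen
      have hs := List.length_pos_of_mem (fv_mem_varList s)
      have ht := List.length_pos_of_mem (fv_mem_varList t)
      exact .inr ⟨s, ⟨fun i hi => hlt i (.inl hi), by omega⟩,
        t, ⟨fun i hi => hlt i (.inr hi), by omega⟩, rfl⟩

theorem finite_setOf_orderly_lv_lt (m : ℕ) : {t : Tm BinF | t.Orderly ∧ t.lv < m}.Finite := by
  refine (finite_setOf_varList_lt_length_le m m).subset fun t ⟨ht, hlt⟩ => ?_
  have hbound : ∀ i ∈ t.varList, i < m := fun i hi => (ht.mem_varList hi).2.trans_lt hlt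
  refine ⟨hbound, ?_⟩
  have hnodup : t.varList.Nodup := (orderly_iff.1 ht).pairwise.imp Nat.ne_of_lt
  simpa using (hnodup.subperm fun i hi => List.mem_range.2 (hbound i hi)).length_le

end Orderly

section Admissible

theorem admissible_of_lv_lt_fv {σ : ℕ → Tm BinF} (hσ : ∀ i, (σ i).Orderly)
    (hmono : ∀ i j, i < j → (σ i).lv < (σ j).fv) : Admissible σ :=
  ⟨hσ, fun i => termLT_iff.2 (hmono i (i + 1) i.lt_succ_self)⟩

theorem Admissible.lv_lt_fv {σ : ℕ → Tm BinF} (hσ : Admissible σ) {i j : ℕ} (hij : i < j) :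
    (σ i).lv < (σ j).fv := by
  induction j, hij using Nat.le_induction with
  | base => exact termLT_iff.1 (hσ.2 i)
  | succ j hij ih =>
    have := (hσ.1 j).fv_le_lv
    have := termLT_iff.1 (hσ.2 j)
    omega

theorem Admissible.orderly_subst {σ : ℕ → Tm BinF} (hσ : Admissible σ) {t : Tm BinF}
    (ht : t.Orderly) : (t.subst σ).Orderly :=
  ht.subst (fun i _ => hσ.1 i) (fun _ _ _ _ hij => hσ.lv_lt_fv hij)

theorem Admissible.substComp {σ τ : ℕ → Tm BinF} (hσ : Admissible σ) (hτ : Admissible τ) :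
    Admissible (substComp σ τ) :=
  admissible_of_lv_lt_fv (fun i => hτ.orderly_subst (hσ.1 i)) fun i j hij => by
    simp only [Tm.substComp, lv_subst, fv_subst]
    exact hτ.lv_lt_fv (hσ.lv_lt_fv hij)

theorem admissible_var : Admissible (Tm.var : ℕ → Tm BinF) :=
  admissible_of_lv_lt_fv orderly_var fun _ _ hij => hij

def orderlyFrom (m : ℕ) : Set (Tm BinF) := {u | u.Orderly ∧ m ≤ u.fv}

def increasingPairs : Set (Tm BinF × Tm BinF) :=
  {p | p.1.Orderly ∧ p.2.Orderly ∧ p.1.lv < p.2.fv}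

theorem Admissible.subst_mem_orderlyFrom {q : ℕ → Tm BinF} (hq : Admissible q)
    {p : Tm BinF × Tm BinF} (hp : p ∈ increasingPairs) :
    p.2.subst q ∈ orderlyFrom ((p.1.subst q).lv + 1) :=
  ⟨hq.orderly_subst hp.2.1, by rw [lv_subst, fv_subst]; exact hq.lv_lt_fv hp.2.2⟩

theorem orderly_subst_var_sub {N : ℕ} {u : Tm BinF} (hu : u ∈ orderlyFrom N) :
    (u.subst fun i => .var (i - N)).Orderly :=
  hu.1.subst (fun _ _ => orderly_var _) fun i hi j _ hij => by
    have := hu.2.trans (hu.1.mem_varList hi).1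
    simp only [lv_var, fv_var]
    omega

end Admissible

section FixesBelow

structure FixesBelow (m : ℕ) (σ : ℕ → Tm BinF) : Prop where
  admissible : Admissible σ
  eq_var : ∀ i < m, σ i = .var i
  le_fv : ∀ i, m ≤ i → m ≤ (σ i).fv

variable {m : ℕ} {σ τ : ℕ → Tm BinF}

theorem fixesBelow_var (m : ℕ) : FixesBelow m Tm.var :=
  ⟨admissible_var, fun _ _ => rfl, fun _ h => h⟩

theorem FixesBelow.mono (hσ : FixesBelow m σ) {k : ℕ} (hk : k ≤ m) : FixesBelow k σ := by
  refine ⟨hσ.admissible, fun i hi => hσ.eq_var i (hi.trans_le hk), fun i hi => ?_⟩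
  rcases lt_or_ge i m with him | him
  · rw [hσ.eq_var i him, fv_var]
    exact hi
  · exact hk.trans (hσ.le_fv i him)

theorem FixesBelow.substComp (hσ : FixesBelow m σ) (hτ : FixesBelow m τ) :
    FixesBelow m (substComp σ τ) where
  admissible := hσ.admissible.substComp hτ.admissible
  eq_var i hi := by simp only [Tm.substComp, hσ.eq_var i hi, subst, hτ.eq_var i hi]
  le_fv i hi := by
    rw [Tm.substComp, fv_subst]
    exact hτ.le_fv _ (hσ.le_fv i hi)

theorem FixesBelow.subst_eq (hσ : FixesBelow m σ) {t : Tm BinF} (ht : t.Orderly)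
    (hlt : t.lv < m) : t.subst σ = t :=
  (ht.subst_congr hlt hσ.eq_var).trans (subst_var_self t)

theorem FixesBelow.mapsTo (hσ : FixesBelow m σ) :
    MapsTo (Tm.subst σ) (orderlyFrom m) (orderlyFrom m) :=
  fun _ hu => ⟨hσ.admissible.orderly_subst hu.1, by rw [fv_subst]; exact hσ.le_fv _ hu.2⟩

def liftAbove (N : ℕ) (ρ : ℕ → Tm BinF) : ℕ → Tm BinF := fun i =>
  if i < N then .var i else (ρ (i - N)).subst fun j => .var (N + j)

theorem Admissible.fixesBelow_liftAbove {ρ : ℕ → Tm BinF} (hρ : Admissible ρ) (N : ℕ) :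
    FixesBelow N (liftAbove N ρ) := by
  have hfv : ∀ i, N ≤ i → (liftAbove N ρ i).fv = N + (ρ (i - N)).fv := fun i hi => by
    simp only [liftAbove, if_neg (not_lt.2 hi), fv_subst, fv_var]
  have hlv : ∀ i, N ≤ i → (liftAbove N ρ i).lv = N + (ρ (i - N)).lv := fun i hi => by
    simp only [liftAbove, if_neg (not_lt.2 hi), lv_subst, lv_var]
  refine ⟨admissible_of_lv_lt_fv (fun i => ?_) (fun i j hij => ?_), fun i hi => if_pos hi,
    fun i hi => by rw [hfv i hi]; omega⟩
  · unfold liftAbove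
    split_ifs
    · exact orderly_var i
    · exact (hρ.1 _).subst (fun _ _ => orderly_var _) fun _ _ _ _ h => by simpa using h
  · rcases lt_or_ge j N with hj | hj
    · simp only [liftAbove, if_pos hj, if_pos (hij.trans hj), lv_var, fv_var, hij]
    rw [hfv j hj]
    rcases lt_or_ge i N with hi | hi
    · simp only [liftAbove, if_pos hi, lv_var]
      omega
    · have := hρ.lv_lt_fv (show i - N < j - N by omega)
      rw [hlv i hi]
      omega

theorem subst_liftAbove {N : ℕ} (ρ : ℕ → Tm BinF) {u : Tm BinF} (hu : u ∈ orderlyFrom N) :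
    u.subst (liftAbove N ρ) =
      ((u.subst fun i => .var (i - N)).subst ρ).subst fun j => .var (N + j) := by
  rw [subst_subst, subst_subst]
  refine subst_congr fun i hi => ?_
  have : N ≤ i := hu.2.trans (hu.1.mem_varList hi).1
  simp [liftAbove, Tm.substComp, subst, this]

end FixesBelow

section Fusion

variable {τ : ℕ → (ℕ → Tm BinF) → ℕ → Tm BinF}

variable (τ) in
def fusionSeq : ℕ → ℕ → Tm BinF
  | 0 => Tm.var
  | m + 1 => substComp (τ m (fusionSeq m)) (fusionSeq m)

variable (τ) in
def fusionLimit (i : ℕ) : Tm BinF := fusionSeq τ (i + 1) i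

theorem exists_fixesBelow_fusionSeq_eq (hτ : ∀ m g, FixesBelow m (τ m g)) {m K : ℕ}
    (h : m ≤ K) : ∃ ρ, FixesBelow m ρ ∧ fusionSeq τ K = substComp ρ (fusionSeq τ m) := by
  induction K, h using Nat.le_induction with
  | base => exact ⟨Tm.var, fixesBelow_var m, rfl⟩
  | succ K hK ih =>
    obtain ⟨ρ, hρ, hρK⟩ := ih
    refine ⟨substComp (τ K (fusionSeq τ K)) ρ, ((hτ K _).mono hK).substComp hρ, ?_⟩
    rw [substComp_assoc, ← hρK]
    rfl

theorem admissible_fusionSeq (hτ : ∀ m g, FixesBelow m (τ m g)) (K : ℕ) :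
    Admissible (fusionSeq τ K) := by
  obtain ⟨ρ, hρ, h⟩ := exists_fixesBelow_fusionSeq_eq hτ K.zero_le
  rw [h]
  exact hρ.admissible.substComp admissible_var

theorem fusionLimit_eq (hτ : ∀ m g, FixesBelow m (τ m g)) {i K : ℕ} (h : i < K) :
    fusionLimit τ i = fusionSeq τ K i := by
  obtain ⟨ρ, hρ, hK⟩ := exists_fixesBelow_fusionSeq_eq hτ h
  rw [hK, substComp, hρ.eq_var i i.lt_succ_self]
  rfl

theorem admissible_fusionLimit (hτ : ∀ m g, FixesBelow m (τ m g)) :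
    Admissible (fusionLimit τ) :=
  admissible_of_lv_lt_fv (fun i => (admissible_fusionSeq hτ (i + 1)).1 i) fun i j hij => by
    rw [fusionLimit_eq hτ (hij.trans j.lt_succ_self)]
    exact (admissible_fusionSeq hτ (j + 1)).lv_lt_fv hij

theorem exists_fusion {Good : ℕ → (ℕ → Tm BinF) → Prop}
    (hstep : ∀ m g, Admissible g → ∃ σ, FixesBelow m σ ∧ Good m (substComp σ g))
    (hmono : ∀ m g ρ, Good m g → FixesBelow m ρ → Good m (substComp ρ g)) :
    ∃ L, Admissible L ∧ ∀ m N, ∃ g, Good m g ∧ ∀ i < N, L i = g i := by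
  -- `τ m g` is chosen for every `g`, so that `fusionSeq τ` needs no admissibility proofs.
  have : ∀ m g, ∃ σ, FixesBelow m σ ∧ (Admissible g → Good m (substComp σ g)) := fun m g => by
    by_cases hg : Admissible g
    · obtain ⟨σ, hσ, h⟩ := hstep m g hg
      exact ⟨σ, hσ, fun _ => h⟩
    · exact ⟨Tm.var, fixesBelow_var m, fun h => (hg h).elim⟩
  choose τ hτ hgood using this
  refine ⟨fusionLimit τ, admissible_fusionLimit hτ, fun m N =>
    ⟨fusionSeq τ (max (m + 1) N), ?_, fun i hi => fusionLimit_eq hτ (lt_max_of_lt_right hi)⟩⟩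
  obtain ⟨ρ, hρ, h⟩ := exists_fixesBelow_fusionSeq_eq hτ (le_max_left (m + 1) N)
  rw [h]
  exact hmono m _ ρ (hgood m _ (admissible_fusionSeq hτ m)) (hρ.mono m.le_succ)

end Fusion

end Tm

open Tm

section Monochromatic

variable {α γ δ : Type*} {F G : α → γ} {S : Set α} {Y : Set γ}

def Monochromatic (F : α → γ) (S : Set α) (Y : Set γ) : Prop :=
  MapsTo F S Y ∨ MapsTo F S Yᶜ

theorem Monochromatic.comp (h : Monochromatic F S Y) {g : δ → α} {T : Set δ}
    (hg : MapsTo g T S) : Monochromatic (F ∘ g) T Y :=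
  h.imp (·.comp hg) (·.comp hg)

theorem Monochromatic.congr (h : Monochromatic F S Y) (hFG : EqOn F G S) :
    Monochromatic G S Y :=
  h.imp (·.congr hFG) (·.congr hFG)

theorem Monochromatic.mem_iff (h : Monochromatic F S Y) {x y : α} (hx : x ∈ S) (hy : y ∈ S) :
    F x ∈ Y ↔ F y ∈ Y := by
  rcases h with h | h
  · exact iff_of_true (h hx) (h hy)
  · exact iff_of_false (h hx) (h hy)

theorem monochromatic_of_forall_iff (h : ∀ x ∈ S, ∀ y ∈ S, F x ∈ Y ↔ F y ∈ Y) :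
    Monochromatic F S Y := by
  by_cases hY : ∃ x ∈ S, F x ∈ Y
  · obtain ⟨x, hxS, hxY⟩ := hY
    exact .inl fun y hy => (h x hxS y hy).1 hxY
  · push Not at hY
    exact .inr hY

theorem homog_iff_monochromatic {F : ℕ → Type u} {β : Type w} {𝒞 : Tm F → β} {X : Set β} :
    Homog 𝒞 X ↔ Monochromatic 𝒞 {t | t.Orderly} X := by
  simp only [Homog, Monochromatic, OAUniv, mapsTo_iff_image_subset,
    subset_compl_iff_disjoint_right, disjoint_iff_inter_eq_empty]

end Monochromatic

section Ramsey

variable {β : Type w} {𝒜 ℬ 𝒞 : Tm BinF → β} {X : Set (β × β)}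

theorem OAReduction.of_admissible {σ : ℕ → Tm BinF} (hσ : Admissible σ) :
    OAReduction (fun t => 𝒜 (t.subst σ)) 𝒜 :=
  ⟨σ, hσ, fun _ _ => rfl⟩

theorem OAReduction.subst (h : OAReduction ℬ 𝒜) {σ : ℕ → Tm BinF} (hσ : Admissible σ) :
    OAReduction (fun t => ℬ (t.subst σ)) 𝒜 := by
  obtain ⟨ts, hts, hℬ⟩ := h
  refine ⟨substComp σ ts, hσ.substComp hts, fun s hs => ?_⟩
  change ℬ (s.subst σ) = _
  rw [hℬ _ (hσ.orderly_subst hs), subst_subst]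

theorem OAReduction.mapsTo_oaUniv (h : OAReduction ℬ 𝒜) :
    MapsTo ℬ {t | t.Orderly} (OAUniv 𝒜) := by
  obtain ⟨ts, hts, hℬ⟩ := h
  exact fun s hs => ⟨s.subst ts, hts.orderly_subst hs, (hℬ s hs).symm⟩

theorem RamseyOA.exists_monochromatic (hR : RamseyOA 𝒜) (hB : OAReduction ℬ 𝒜) (Y : Set β) :
    ∃ ρ, Admissible ρ ∧ Monochromatic (fun u : Tm BinF => ℬ (u.subst ρ)) {u | u.Orderly} Y := by
  obtain ⟨𝒞, ⟨ρ, hρ, h𝒞⟩, hhom⟩ := hR ℬ hB (Y ∩ OAUniv 𝒜) inter_subset_right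
  have hU := (hB.subst hρ).mapsTo_oaUniv
  exact ⟨ρ, hρ, ((homog_iff_monochromatic.1 hhom).congr h𝒞).imp
    (·.mono_right inter_subset_left) fun h u hu hY => h hu ⟨hY, hU hu⟩⟩

theorem RamseyOA.exists_fixesBelow_monochromatic (hR : RamseyOA 𝒜) (hB : OAReduction ℬ 𝒜)
    (N : ℕ) (Y : Set β) :
    ∃ σ, FixesBelow N σ ∧ Monochromatic (fun u : Tm BinF => ℬ (u.subst σ)) (orderlyFrom N) Y := by
  have hshift : Admissible fun j => (Tm.var (N + j) : Tm BinF) :=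
    admissible_of_lv_lt_fv (fun _ => orderly_var _) fun i j hij => by simpa using hij
  obtain ⟨ρ, hρ, hmono⟩ := hR.exists_monochromatic (hB.subst hshift) Y
  refine ⟨liftAbove N ρ, hρ.fixesBelow_liftAbove N,
    (hmono.comp (g := fun u : Tm BinF => u.subst fun i => .var (i - N)) fun _ hu =>
      orderly_subst_var_sub hu).congr fun u hu => ?_⟩
  simp only [Function.comp, subst_liftAbove ρ hu]

def EndMonochromaticAt (m : ℕ) (ℬ : Tm BinF → β) (X : Set (β × β)) : Prop :=
  ∀ r : Tm BinF, r.Orderly → r.lv < m → Monochromatic (fun u => (ℬ r, ℬ u)) (orderlyFrom m) X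

def EndMonochromatic (𝒞 : Tm BinF → β) (X : Set (β × β)) : Prop :=
  ∀ r : Tm BinF, r.Orderly → Monochromatic (fun u => (𝒞 r, 𝒞 u)) (orderlyFrom (r.lv + 1)) X

theorem EndMonochromaticAt.subst {m : ℕ} (h : EndMonochromaticAt m ℬ X) {ρ : ℕ → Tm BinF}
    (hρ : FixesBelow m ρ) : EndMonochromaticAt m (fun t => ℬ (t.subst ρ)) X :=
  fun r hr hlt => by
    simp only [hρ.subst_eq hr hlt]
    exact (h r hr hlt).comp hρ.mapsTo

theorem RamseyOA.exists_fixesBelow_forall_monochromatic (hR : RamseyOA 𝒜) {m : ℕ}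
    (X : Set (β × β)) {R : Set (Tm BinF)} (hfin : R.Finite)
    (hlt : ∀ r ∈ R, r.Orderly ∧ r.lv < m) (hB : OAReduction ℬ 𝒜) :
    ∃ σ, FixesBelow m σ ∧
      ∀ r ∈ R, Monochromatic (fun u : Tm BinF => (ℬ r, ℬ (u.subst σ))) (orderlyFrom m) X := by
  induction R, hfin using Set.Finite.induction_on generalizing ℬ with
  | empty => exact ⟨Tm.var, fixesBelow_var m, fun _ h => h.elim⟩
  | @insert r R _ _ ih =>
    obtain ⟨σ₁, hσ₁, hr⟩ := hR.exists_fixesBelow_monochromatic hB m {y | (ℬ r, y) ∈ X}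
    obtain ⟨σ₂, hσ₂, hR'⟩ :=
      ih (fun r' hr' => hlt r' (.inr hr')) (hB.subst hσ₁.admissible)
    refine ⟨substComp σ₂ σ₁, hσ₂.substComp hσ₁, fun r' hr' => ?_⟩
    simp only [← subst_subst]
    rcases hr' with rfl | hr'
    · exact hr.comp hσ₂.mapsTo
    · have := hR' r' hr'
      rwa [hσ₁.subst_eq (hlt r' (.inr hr')).1 (hlt r' (.inr hr')).2] at this

theorem RamseyOA.exists_fixesBelow_endMonochromaticAt (hR : RamseyOA 𝒜) (hB : OAReduction ℬ 𝒜)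
    (m : ℕ) (X : Set (β × β)) :
    ∃ σ, FixesBelow m σ ∧ EndMonochromaticAt m (fun t => ℬ (t.subst σ)) X := by
  obtain ⟨σ, hσ, h⟩ :=
    hR.exists_fixesBelow_forall_monochromatic X (finite_setOf_orderly_lv_lt m) (fun _ h => h) hB
  refine ⟨σ, hσ, fun r hr hlt => ?_⟩
  simpa only [hσ.subst_eq hr hlt] using h r ⟨hr, hlt⟩

theorem RamseyOA.exists_endMonochromatic (hR : RamseyOA 𝒜) (hB : OAReduction ℬ 𝒜)
    (X : Set (β × β)) : ∃ L, Admissible L ∧ EndMonochromatic (fun t => ℬ (t.subst L)) X := by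
  obtain ⟨L, hL, happrox⟩ :=
    exists_fusion (Good := fun m g => EndMonochromaticAt m (fun t => ℬ (t.subst g)) X)
      (fun m g hg => by
        simpa only [subst_subst] using hR.exists_fixesBelow_endMonochromaticAt (hB.subst hg) m X)
      (fun m g ρ h hρ => by simpa only [subst_subst] using h.subst hρ)
  refine ⟨L, hL, fun r hr => monochromatic_of_forall_iff fun u hu u' hu' => ?_⟩
  obtain ⟨g, hg, hLg⟩ := happrox (r.lv + 1) (max u.lv u'.lv + 1)
  have := hu.1.fv_le_lv
  have := hu.2
  simp only [hr.subst_congr (by omega) hLg, hu.1.subst_congr (by omega) hLg,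
    hu'.1.subst_congr (by omega) hLg]
  exact (hg r hr r.lv.lt_succ_self).mem_iff hu hu'

theorem EndMonochromatic.exists_monochromatic_pairs (hR : RamseyOA 𝒜) (h𝒞 : OAReduction 𝒞 𝒜)
    (hend : EndMonochromatic 𝒞 X) :
    ∃ q, Admissible q ∧ Monochromatic (fun p : Tm BinF × Tm BinF => (𝒞 (p.1.subst q),
      𝒞 (p.2.subst q))) increasingPairs X := by
  -- By end-monochromaticity, `𝒞 r ∈ Y` decides the colour of every pair `(𝒞 r, 𝒞 u)`, `r < u`.
  set Y : Set β := {y | ∃ N, MapsTo (fun u => (y, 𝒞 u)) (orderlyFrom N) X}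
  have hY : ∀ r : Tm BinF, r.Orderly → 𝒞 r ∈ Y →
      MapsTo (fun u => (𝒞 r, 𝒞 u)) (orderlyFrom (r.lv + 1)) X := by
    rintro r hr ⟨N, hX⟩
    have hv := hX (x := .var (max r.lv N + 1)) ⟨orderly_var _, by simp only [fv_var]; omega⟩
    exact (hend r hr).resolve_right fun hXc => hXc ⟨orderly_var _, by simp⟩ hv
  obtain ⟨q, hq, hin | hout⟩ := hR.exists_monochromatic h𝒞 Y
  · exact ⟨q, hq, .inl fun p hp =>
      hY _ (hq.orderly_subst hp.1) (hin hp.1) (hq.subst_mem_orderlyFrom hp)⟩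
  · refine ⟨q, hq, .inr fun p hp hX => hout hp.1 ⟨(p.1.subst q).lv + 1, ?_⟩⟩
    exact (hend _ (hq.orderly_subst hp.1)).resolve_right fun hXc =>
      hXc (hq.subst_mem_orderlyFrom hp) hX

theorem RamseyOA.exists_monochromatic_pairs (hR : RamseyOA 𝒜) (hB : OAReduction ℬ 𝒜)
    (X : Set (β × β)) :
    ∃ q, Admissible q ∧ Monochromatic (fun p : Tm BinF × Tm BinF => (ℬ (p.1.subst q),
      ℬ (p.2.subst q))) increasingPairs X := by
  obtain ⟨L, hL, hend⟩ := hR.exists_endMonochromatic hB X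
  obtain ⟨q, hq, h⟩ := hend.exists_monochromatic_pairs hR (hB.subst hL)
  exact ⟨substComp q L, hq.substComp hL, by simpa only [subst_subst] using h⟩

end Ramsey

namespace Tm

theorem xyPair_fapp (s t : Tm BinF) :
    xyPair (fapp s t) = (fapp (xyPair s).1 (xyPair s).2, fapp (xyPair t).1 (xyPair t).2) :=
  rfl

@[simp] theorem fv_xyPair_fst (t : Tm BinF) : (xyPair t).1.fv = 2 * t.fv := by
  induction t using fapp_induction with
  | var i => rfl
  | app s t hs _ => rw [xyPair_fapp, fv_fapp, hs, fv_fapp]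

@[simp] theorem lv_xyPair_snd (t : Tm BinF) : (xyPair t).2.lv = 2 * t.lv + 1 := by
  induction t using fapp_induction with
  | var i => rfl
  | app s t _ ht => rw [xyPair_fapp, lv_fapp, ht, lv_fapp]

theorem Orderly.xyPair_mem {t : Tm BinF} (ht : t.Orderly) : xyPair t ∈ increasingPairs := by
  induction t using fapp_induction with
  | var i => exact ⟨orderly_var _, orderly_var _, by simp [xyPair]⟩
  | app s t hs ht' =>
    obtain ⟨os, ot, hst⟩ := orderly_fapp.1 ht
    rw [xyPair_fapp]
    exact ⟨orderly_fapp.2 (hs os), orderly_fapp.2 (ht' ot), by simp only [lv_fapp, lv_xyPair_snd, fv_fapp, fv_xyPair_fst]; omega⟩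

def interleaveXY (σ : ℕ → Tm BinF) : ℕ → Tm BinF := fun j =>
  if j % 2 = 0 then (xyPair (σ (j / 2))).1 else (xyPair (σ (j / 2))).2

theorem interleaveXY_two_mul (σ : ℕ → Tm BinF) (i : ℕ) :
    interleaveXY σ (2 * i) = (xyPair (σ i)).1 := by
  simp [interleaveXY]

theorem interleaveXY_two_mul_add_one (σ : ℕ → Tm BinF) (i : ℕ) :
    interleaveXY σ (2 * i + 1) = (xyPair (σ i)).2 := by
  simp [interleaveXY, Nat.add_mod, Nat.add_div]

theorem xyPair_subst (σ : ℕ → Tm BinF) (s : Tm BinF) :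
    xyPair (s.subst σ) =
      ((xyPair s).1.subst (interleaveXY σ), (xyPair s).2.subst (interleaveXY σ)) := by
  induction s using fapp_induction with
  | var i => simp [xyPair, subst, interleaveXY_two_mul, interleaveXY_two_mul_add_one]
  | app s t hs ht => simp only [subst_fapp, xyPair_fapp, hs, ht]

theorem Admissible.interleaveXY {σ : ℕ → Tm BinF} (hσ : Admissible σ) :
    Admissible (interleaveXY σ) := by
  refine ⟨fun j => ?_, fun j => termLT_iff.2 ?_⟩ <;> obtain ⟨i, rfl | rfl⟩ := Nat.even_or_odd' j
  · exact interleaveXY_two_mul σ i ▸ ((hσ.1 i).xyPair_mem).1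
  · exact interleaveXY_two_mul_add_one σ i ▸ ((hσ.1 i).xyPair_mem).2.1
  · rw [interleaveXY_two_mul, interleaveXY_two_mul_add_one]
    exact ((hσ.1 i).xyPair_mem).2.2
  · rw [interleaveXY_two_mul_add_one, show 2 * i + 1 + 1 = 2 * (i + 1) by ring,
      interleaveXY_two_mul, lv_xyPair_snd, fv_xyPair_fst]
    have := hσ.lv_lt_fv (Nat.lt_add_one i)
    omega

def pairVars : ℕ → Tm BinF := fun i => fapp (.var (2 * i)) (.var (2 * i + 1))

theorem admissible_pairVars : Admissible pairVars :=
  admissible_of_lv_lt_fv (fun _ => orderly_fapp.2 ⟨orderly_var _, orderly_var _, by simp⟩)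
    fun i j hij => by simp only [pairVars, lv_fapp, lv_var, fv_fapp, fv_var]; omega

theorem subst_pairVars (t : Tm BinF) : t.subst pairVars = fapp (xyPair t).1 (xyPair t).2 := by
  induction t using fapp_induction with
  | var i => rfl
  | app s t hs ht => rw [subst_fapp, hs, ht, xyPair_fapp]

theorem interleaveXY_substComp_pairVars (q : ℕ → Tm BinF) :
    interleaveXY (substComp pairVars q) = substComp q pairVars := by
  funext j
  obtain ⟨i, rfl | rfl⟩ := Nat.even_or_odd' j
  · rw [interleaveXY_two_mul, substComp, substComp, subst_pairVars]
    rfl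
  · rw [interleaveXY_two_mul_add_one, substComp, substComp, subst_pairVars]
    rfl

end Tm

theorem sharpOA_subst {β : Type w} (𝒜 : Tm BinF → β) (σ : ℕ → Tm BinF) (s : Tm BinF) :
    sharpOA 𝒜 (s.subst σ) = sharpOA (fun t => 𝒜 (t.subst (interleaveXY σ))) s := by
  simp only [sharpOA, xyPair_subst]

theorem sharp_ramsey_general {β : Type w} (𝒜 : Tm BinF → β) (hR : RamseyOA 𝒜) :
    RamseyOA (sharpOA 𝒜) := by
  rintro ℬ ⟨t, ht, hℬ⟩ X -
  obtain ⟨q, hq, hmono⟩ := hR.exists_monochromatic_pairs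
    (.of_admissible (admissible_pairVars.substComp ht.interleaveXY)) X
  have hσ := admissible_pairVars.substComp hq
  refine ⟨fun s => ℬ (s.subst (substComp pairVars q)), ⟨_, hσ, fun _ _ => rfl⟩,
    homog_iff_monochromatic.2 ((hmono.comp fun _ hs => hs.xyPair_mem).congr fun s hs => ?_)⟩
  rw [Function.comp_apply, hℬ _ (hσ.orderly_subst hs), sharpOA_subst, sharpOA_subst,
    interleaveXY_substComp_pairVars]
  simp only [sharpOA, subst_subst, substComp_assoc]

/-- If the orderly algebra `𝒜` is Ramsey, then so is `♯𝒜`. -/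
theorem sharp_ramsey {β : Type w} (𝒜 : Tm BinF → β) (h𝒜 : IsOrderlyAlg 𝒜)
    (hR : RamseyOA 𝒜) : RamseyOA (sharpOA 𝒜) :=
  sharp_ramsey_general 𝒜 hR
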